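/- If a rooted directed graph (Γ, v) has the unique simple path property, then the frame Fr Γ (the graph obtained by contracting each strongly connected component to a point, with edge set the transition edges) is a directed rooted tree rooted at the component of v, and each strongly connected component has a unique transition edge entering it. -/

import Mathlib

/-!
A transition edge `e` lies on every path from `v` to `τ e`: such a path contains a simple path to
`τ e` as a sublist, and by uniqueness this is the simple path to `ι e` followed by `e`. Applied to a
path from `v` through `e` into the component of another transition edge `f`, this forces `e = f`:
if `f` came before `e`, then `τ e` would reach `ι e`; if after, then `τ f` would reach `ι f`.
So every vertex of the frame has at most one incoming edge and the component of `v` has none (as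
everything is reachable from `v`), which makes frame paths from the root unique; they exist because
paths of the graph project to the frame.
-/

structure DGraph : Type 1 where
  V : Type
  E : Type
  ι : E → V
  τ : E → V

namespace DGraph

/-- A directed path from `u` to `w` given by its list of edges. -/
inductive Path (G : DGraph) : G.V → G.V → List G.E → Prop
  | nil (v : G.V) : Path G v v []
  | cons (e : G.E) {w : G.V} {p : List G.E} :
      Path G (G.τ e) w p → Path G (G.ι e) w (e :: p)

/-- The list of vertices visited by a path `p` starting at `u`. -/
def verts (G : DGraph) (u : G.V) (p : List G.E) : List G.V :=
  u :: p.map G.τ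

/-- A simple directed path: a path visiting no vertex twice. -/
def SimplePath (G : DGraph) (u w : G.V) (p : List G.E) : Prop :=
  G.Path u w p ∧ (G.verts u p).Nodup

/-- `w` is reachable from `u` by a directed path. -/
def Reach (G : DGraph) (u w : G.V) : Prop := ∃ p, G.Path u w p

/-- A graph is rooted at `v` if every vertex is reachable from `v`. -/
def Rooted (G : DGraph) (v : G.V) : Prop := ∀ w, G.Reach v w

end DGraph


namespace DGraph

theorem Path.append {G : DGraph} {u v w : G.V} {p q : List G.E}
    (h1 : G.Path u v p) : G.Path v w q → G.Path u w (p ++ q) := by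
  induction h1 with
  | nil v => exact fun h2 => h2
  | cons e h ih => exact fun h2 => Path.cons e (ih h2)

/-- Mutual reachability is an equivalence relation; its classes are the
strongly connected components. -/
def rsetoid (G : DGraph) : Setoid G.V where
  r u w := G.Reach u w ∧ G.Reach w u
  iseqv := ⟨fun u => ⟨⟨[], Path.nil u⟩, ⟨[], Path.nil u⟩⟩,
    fun h => ⟨h.2, h.1⟩,
    fun h1 h2 =>
      ⟨⟨h1.1.choose ++ h2.1.choose, h1.1.choose_spec.append h2.1.choose_spec⟩,
       ⟨h2.2.choose ++ h1.2.choose, h2.2.choose_spec.append h1.2.choose_spec⟩⟩⟩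

/-- A transition edge: an edge between distinct strong components, i.e. one
whose initial vertex is not reachable from its terminal vertex. -/
def Transition (G : DGraph) (e : G.E) : Prop := ¬ G.Reach (G.τ e) (G.ι e)

/-- The frame of a graph: strong components as vertices, transition edges as
edges. -/
def Frame (G : DGraph) : DGraph where
  V := Quotient G.rsetoid
  E := {e : G.E // G.Transition e}
  ι := fun e => Quotient.mk G.rsetoid (G.ι e.1)
  τ := fun e => Quotient.mk G.rsetoid (G.τ e.1)

variable {G : DGraph}

theorem Reach.refl (u : G.V) : G.Reach u u := ⟨[], Path.nil u⟩

theorem Reach.trans {u v w : G.V} : G.Reach u v → G.Reach v w → G.Reach u w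
  | ⟨_, hp⟩, ⟨_, hq⟩ => ⟨_, hp.append hq⟩

theorem Path.reach {u w : G.V} {p : List G.E} (h : G.Path u w p) : G.Reach u w := ⟨p, h⟩

theorem path_nil_iff {u w : G.V} : G.Path u w [] ↔ u = w :=
  ⟨fun | .nil _ => rfl, fun h => h ▸ Path.nil u⟩

theorem path_cons_iff {u w : G.V} {e : G.E} {p : List G.E} :
    G.Path u w (e :: p) ↔ G.ι e = u ∧ G.Path (G.τ e) w p :=
  ⟨fun | .cons _ h => ⟨rfl, h⟩, fun ⟨he, h⟩ => he ▸ h.cons e⟩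

theorem path_append_iff {u w : G.V} {p q : List G.E} :
    G.Path u w (p ++ q) ↔ ∃ x, G.Path u x p ∧ G.Path x w q := by
  induction p generalizing u with
  | nil => simp [path_nil_iff]
  | cons e p ih => simp [path_cons_iff, ih, and_assoc]

theorem path_append_singleton_iff {u w : G.V} {p : List G.E} {e : G.E} :
    G.Path u w (p ++ [e]) ↔ G.Path u (G.ι e) p ∧ G.τ e = w := by
  simp [path_append_iff, path_cons_iff, path_nil_iff]

theorem Path.reach_of_mem {u w : G.V} {p : List G.E} {e : G.E} (h : G.Path u w p)
    (he : e ∈ p) : G.Reach u (G.ι e) ∧ G.Reach (G.τ e) w := by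
  obtain ⟨s, t, rfl⟩ := List.append_of_mem he
  rw [path_append_iff] at h
  obtain ⟨x, hs, ht⟩ := h
  rw [path_cons_iff] at ht
  obtain ⟨rfl, ht⟩ := ht
  exact ⟨hs.reach, ht.reach⟩

theorem verts_cons (u : G.V) (e : G.E) (p : List G.E) :
    G.verts u (e :: p) = u :: G.verts (G.τ e) p := rfl

theorem verts_append_singleton (u : G.V) (p : List G.E) (e : G.E) :
    G.verts u (p ++ [e]) = (G.verts u p).concat (G.τ e) := by
  simp [verts]

theorem Path.exists_suffix_of_mem_verts {u w x : G.V} {p : List G.E} (h : G.Path u w p)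
    (hx : x ∈ G.verts u p) : ∃ q, q <:+ p ∧ G.Path x w q ∧ G.verts x q <:+ G.verts u p := by
  induction h with
  | nil u =>
    obtain rfl : x = u := List.mem_singleton.1 hx
    exact ⟨[], List.suffix_refl _, Path.nil x, List.suffix_refl _⟩
  | cons e h ih =>
    rw [verts_cons] at hx ⊢
    rcases List.mem_cons.1 hx with rfl | hx
    · exact ⟨_, List.suffix_refl _, h.cons e, List.suffix_refl _⟩
    · obtain ⟨q, hq, hqw, hverts⟩ := ih hx
      exact ⟨q, hq.trans (List.suffix_cons e _), hqw, hverts.trans (List.suffix_cons _ _)⟩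

theorem Path.exists_sublist_simplePath {u w : G.V} {p : List G.E} (h : G.Path u w p) :
    ∃ q, q.Sublist p ∧ G.SimplePath u w q := by
  induction h with
  | nil u => exact ⟨[], List.Sublist.refl _, Path.nil u, List.nodup_singleton u⟩
  | cons e h ih =>
    obtain ⟨q, hqp, hq, hnodup⟩ := ih
    by_cases hmem : G.ι e ∈ G.verts (G.τ e) q
    · -- `e` closes a cycle: restart at the later visit of `ι e`
      obtain ⟨r, hrq, hr, hverts⟩ := hq.exists_suffix_of_mem_verts hmem
      exact ⟨r, (hrq.sublist.trans hqp).trans (List.sublist_cons_self e _), hr,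
        hnodup.sublist hverts.sublist⟩
    · exact ⟨e :: q, hqp.cons_cons e, hq.cons e, List.nodup_cons.2 ⟨hmem, hnodup⟩⟩

theorem Path.eq_of_injective_τ {r w : G.V} {p q : List G.E} (hτ : Function.Injective G.τ)
    (hr : ∀ e, G.τ e ≠ r) (hp : G.Path r w p) (hq : G.Path r w q) : p = q := by
  induction p using List.reverseRecOn generalizing w q with
  | nil =>
    obtain rfl := path_nil_iff.1 hp
    rcases q.eq_nil_or_concat' with rfl | ⟨q, f, rfl⟩
    · rfl
    · exact absurd (path_append_singleton_iff.1 hq).2 (hr f)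
  | append_singleton p e ih =>
    rw [path_append_singleton_iff] at hp
    obtain ⟨hp, rfl⟩ := hp
    rcases q.eq_nil_or_concat' with rfl | ⟨q, f, rfl⟩
    · exact absurd (path_nil_iff.1 hq).symm (hr e)
    · rw [path_append_singleton_iff] at hq
      obtain ⟨hq, hfe⟩ := hq
      obtain rfl := hτ hfe
      rw [ih hp hq]

theorem Path.exists_τ_eq {r w : G.V} {p : List G.E} (hp : G.Path r w p) (hw : w ≠ r) :
    ∃ e, G.τ e = w := by
  rcases p.eq_nil_or_concat' with rfl | ⟨p, e, rfl⟩
  · exact absurd (path_nil_iff.1 hp).symm hw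
  · exact ⟨e, (path_append_singleton_iff.1 hp).2⟩

theorem Transition.not_mem_verts {u : G.V} {e : G.E} {p : List G.E} (he : G.Transition e)
    (hp : G.Path u (G.ι e) p) : G.τ e ∉ G.verts u p := fun hmem =>
  have ⟨_, _, hq, _⟩ := hp.exists_suffix_of_mem_verts hmem
  he hq.reach

theorem SimplePath.append_transition {u : G.V} {e : G.E} {p : List G.E}
    (hp : G.SimplePath u (G.ι e) p) (he : G.Transition e) :
    G.SimplePath u (G.τ e) (p ++ [e]) := by
  refine ⟨path_append_singleton_iff.2 ⟨hp.1, rfl⟩, ?_⟩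
  rw [verts_append_singleton, List.nodup_concat]
  exact ⟨he.not_mem_verts hp.1, hp.2⟩

section UniqueSimplePaths

variable {v : G.V} (huspp : ∀ w : G.V, ∃! p : List G.E, G.SimplePath v w p)
include huspp

theorem Transition.mem_of_path {e : G.E} (he : G.Transition e) {p : List G.E}
    (hp : G.Path v (G.τ e) p) : e ∈ p := by
  obtain ⟨q, hq, -⟩ := huspp (G.ι e)
  obtain ⟨s, hsp, hs⟩ := hp.exists_sublist_simplePath
  obtain rfl : s = q ++ [e] := (huspp (G.τ e)).unique hs (hq.append_transition he)
  exact hsp.subset (List.mem_append_right q (List.mem_singleton_self e))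

theorem Transition.eq_of_reach_τ (hroot : G.Rooted v) {e f : G.E} (he : G.Transition e)
    (hf : G.Transition f) (hef : G.Reach (G.τ e) (G.τ f)) (hfe : G.Reach (G.τ f) (G.τ e)) :
    e = f := by
  obtain ⟨p, hp⟩ := hroot (G.ι e)
  obtain ⟨r, hr⟩ := hef
  have hmem := hf.mem_of_path huspp (hp.append (hr.cons e))
  simp only [List.mem_append, List.mem_cons] at hmem
  rcases hmem with hfp | rfl | hfr
  · exact absurd ((hr.reach.trans (hp.reach_of_mem hfp).2)) he
  · rfl
  · exact absurd (hfe.trans (hr.reach_of_mem hfr).1) hf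

theorem frame_τ_injective (hroot : G.Rooted v) : Function.Injective G.Frame.τ := fun e f h =>
  have ⟨hef, hfe⟩ := Quotient.exact h
  Subtype.ext (Transition.eq_of_reach_τ huspp hroot e.2 f.2 hef hfe)

end UniqueSimplePaths

theorem frame_τ_ne_root {v : G.V} (hroot : G.Rooted v) (e : G.Frame.E) :
    G.Frame.τ e ≠ Quotient.mk G.rsetoid v := fun h =>
  e.2 ((Quotient.exact h).1.trans (hroot _))

theorem Path.frame_reach {u w : G.V} {p : List G.E} (h : G.Path u w p) :
    G.Frame.Reach (Quotient.mk G.rsetoid u) (Quotient.mk G.rsetoid w) := by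
  induction h with
  | nil u => exact Reach.refl _
  | cons e _ ih =>
    by_cases he : G.Transition e
    · exact (Path.cons (G := G.Frame) ⟨e, he⟩ (Path.nil _)).reach.trans ih
    · have hsame : Quotient.mk G.rsetoid (G.ι e) = Quotient.mk G.rsetoid (G.τ e) :=
        Quotient.sound ⟨⟨[e], (Path.nil _).cons e⟩, not_not.mp he⟩
      exact hsame ▸ ih

theorem Rooted.frame {v : G.V} (hroot : G.Rooted v) : G.Frame.Rooted (Quotient.mk G.rsetoid v) :=
  Quotient.ind fun w => (hroot w).choose_spec.frame_reach

/-- If a rooted directed graph `(Γ, v)` has the unique simple path property,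
then its frame is a directed rooted tree rooted at the component of `v`
(each component is reached from the component of `v` by a unique directed
path), and each strong component other than that of `v` has a unique
transition edge entering it. -/
theorem frame_is_tree (G : DGraph) (v : G.V) (hroot : G.Rooted v)
    (huspp : ∀ w : G.V, ∃! p : List G.E, G.SimplePath v w p) :
    (∀ C : G.Frame.V, ∃! p : List G.Frame.E,
        G.Frame.Path (Quotient.mk G.rsetoid v) C p) ∧
      (∀ C : G.Frame.V, C ≠ Quotient.mk G.rsetoid v →
        ∃! e : {e : G.E // G.Transition e},
          Quotient.mk G.rsetoid (G.τ e.1) = C) := by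
  have hτ := frame_τ_injective huspp hroot
  refine ⟨fun C => ?_, fun C hC => ?_⟩
  · obtain ⟨p, hp⟩ := hroot.frame C
    exact ⟨p, hp, fun q hq => hq.eq_of_injective_τ hτ (frame_τ_ne_root hroot) hp⟩
  · obtain ⟨p, hp⟩ := hroot.frame C
    obtain ⟨e, he⟩ := hp.exists_τ_eq hC
    exact ⟨e, he, fun f hf => hτ (hf.trans he.symm)⟩

end DGraph
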